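/- For a function v : Q(N) → ℝ with Möbius transform m, any i ∈ N and any (S,T) ∈ Q(N) with i ∈ T, the right derivative satisfies v(S, T\{i}) - v(S,T) = ∑_{(S',T') ∈ [(∅, N\{i}), (S, T\{i})]} m(S',T'). -/

import Mathlib

/-!
Möbius inversion on `Q(N)`: `v (A, A')` is the sum of `biMobius v` over all pairs below `(A, A')`.
After exchanging sums this reduces to Möbius inversion in the Boolean lattices of the two
coordinates, i.e. to the vanishing of `∑ u ∈ [s, t], (-1) ^ #(u \ s)` for `s ≠ t`.
The pairs below `(S, T \ {i})` split according to whether `i ∈ B'`: those containing `i` are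
exactly the pairs below `(S, T)`, the others form the interval of the statement.
-/

open Finset

/-- The Möbius transform of a function on Q(N). -/
def biMobius {V : Type*} [Fintype V] [DecidableEq V]
    (v : Finset V × Finset V → ℝ) (A A' : Finset V) : ℝ :=
  ∑ B ∈ A.powerset, ∑ B' ∈ (Aᶜ).powerset.filter (fun B' => A' ⊆ B'),
    (-1 : ℝ) ^ ((A \ B).card + (B' \ A').card) * v (B, B')

namespace Finset

variable {α R : Type*} [DecidableEq α] [CommRing R]

theorem sum_Icc_neg_one_pow_card_sdiff_left (s t : Finset α) :
    ∑ u ∈ Icc s t, (-1 : R) ^ #(u \ s) = if s = t then 1 else 0 := by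
  by_cases hst : s ⊆ t
  · have hcancel : ∀ w ∈ (t \ s).powerset, (s ∪ w) \ s = w := fun w hw =>
      union_sdiff_cancel_left (disjoint_of_subset_right (mem_powerset.1 hw) disjoint_sdiff)
    have hinj : Set.InjOn (s ∪ ·) ((t \ s).powerset : Set (Finset α)) := fun w hw w' hw' h => by
      rw [← hcancel w hw, ← hcancel w' hw']
      exact congrArg (· \ s) h
    rw [Icc_eq_image_powerset hst, sum_image hinj, sum_congr rfl fun w hw => by rw [hcancel w hw]]
    have hsum := congrArg (Int.cast : ℤ → R) (sum_powerset_neg_one_pow_card (x := t \ s))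
    push_cast at hsum
    rw [hsum]
    by_cases h : s = t
    · simp [h]
    · rw [if_neg h, if_neg (by simpa using fun hts => h (subset_antisymm hst hts))]
  · rw [Icc_eq_empty (by simpa using hst), if_neg (by rintro rfl; exact hst le_rfl)]
    simp

theorem sum_Icc_neg_one_pow_card_sdiff_right (s t : Finset α) :
    ∑ u ∈ Icc s t, (-1 : R) ^ #(t \ u) = if s = t then 1 else 0 := by
  have hsplit : ∀ u ∈ Icc s t, (-1 : R) ^ #(t \ u) = (-1) ^ #(t \ s) * (-1) ^ #(u \ s) := by
    intro u hu
    obtain ⟨hsu, hut⟩ := mem_Icc.1 hu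
    have hcard : #(t \ s) = #(t \ u) + #(u \ s) := by
      have := card_sdiff_add_card_eq_card hut
      have := card_sdiff_add_card_eq_card hsu
      have := card_sdiff_add_card_eq_card (hsu.trans hut)
      omega
    rw [hcard, pow_add, mul_assoc, ← pow_add, ← two_mul, pow_mul]
    simp
  rw [sum_congr rfl hsplit, ← mul_sum, sum_Icc_neg_one_pow_card_sdiff_left]
  split_ifs with h <;> simp [h]

theorem sum_powerset_sum_powerset_neg_one_pow_mul (f : Finset α → R) (A : Finset α) :
    ∑ s ∈ A.powerset, ∑ b ∈ s.powerset, (-1 : R) ^ #(s \ b) * f b = f A := by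
  rw [sum_comm' (t' := A.powerset) (s' := fun b => Icc b A) fun s b => by
    simp only [mem_powerset, mem_Icc]
    exact ⟨fun ⟨hsA, hbs⟩ => ⟨⟨hbs, hsA⟩, hbs.trans hsA⟩, fun ⟨⟨hbs, hsA⟩, _⟩ => ⟨hsA, hbs⟩⟩]
  simp only [← sum_mul, sum_Icc_neg_one_pow_card_sdiff_left, ite_mul, one_mul, zero_mul]
  simp

theorem sum_Icc_sum_Icc_neg_one_pow_mul (f : Finset α → R) {A C : Finset α} (hAC : A ⊆ C) :
    ∑ t ∈ Icc A C, ∑ b ∈ Icc t C, (-1 : R) ^ #(b \ t) * f b = f A := by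
  rw [sum_comm' (t' := Icc A C) (s' := fun b => Icc A b) fun t b => by
    simp only [mem_Icc]
    exact ⟨fun ⟨⟨hAt, _⟩, htb, hbC⟩ => ⟨⟨hAt, htb⟩, hAt.trans htb, hbC⟩,
      fun ⟨⟨hAt, htb⟩, _, hbC⟩ => ⟨⟨hAt, htb.trans hbC⟩, htb, hbC⟩⟩]
  simp only [← sum_mul, sum_Icc_neg_one_pow_card_sdiff_right, ite_mul, one_mul, zero_mul]
  simp [hAC]

end Finset

section BiMobius

variable {V : Type*} [Fintype V] [DecidableEq V]

theorem biMobius_eq_sum_powerset_sum_Icc (v : Finset V × Finset V → ℝ) (A A' : Finset V) :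
    biMobius v A A' = ∑ B ∈ A.powerset, (-1) ^ #(A \ B) *
      ∑ B' ∈ Icc A' Aᶜ, (-1) ^ #(B' \ A') * v (B, B') := by
  simp only [biMobius, ← Icc_eq_filter_powerset, mul_sum, pow_add, mul_assoc]

theorem sum_biMobius_of_le (v : Finset V × Finset V → ℝ) {A A' : Finset V}
    (h : Disjoint A A') :
    ∑ p ∈ univ.filter (fun p : Finset V × Finset V => Disjoint p.1 p.2 ∧ p.1 ⊆ A ∧ A' ⊆ p.2),
      biMobius v p.1 p.2 = v (A, A') := by
  rw [sum_finset_product' _ A.powerset (fun S => Icc A' Sᶜ) fun p => by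
    simp only [mem_filter, mem_univ, true_and, mem_powerset, mem_Icc,
      subset_compl_iff_disjoint_left]
    tauto]
  calc ∑ S ∈ A.powerset, ∑ T ∈ Icc A' Sᶜ, biMobius v S T
      = ∑ S ∈ A.powerset, ∑ B ∈ S.powerset, (-1) ^ #(S \ B) *
          ∑ T ∈ Icc A' Sᶜ, ∑ B' ∈ Icc T Sᶜ, (-1) ^ #(B' \ T) * v (B, B') := by
        refine sum_congr rfl fun S _ => ?_
        simp only [biMobius_eq_sum_powerset_sum_Icc, mul_sum]
        exact sum_comm
    _ = ∑ S ∈ A.powerset, ∑ B ∈ S.powerset, (-1) ^ #(S \ B) * v (B, A') := by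
        refine sum_congr rfl fun S hS => sum_congr rfl fun B _ => ?_
        have hA' : A' ⊆ Sᶜ := subset_compl_iff_disjoint_left.2 (h.mono_left (mem_powerset.1 hS))
        rw [sum_Icc_sum_Icc_neg_one_pow_mul (fun B' => v (B, B')) hA']
    _ = v (A, A') := sum_powerset_sum_powerset_neg_one_pow_mul (fun B => v (B, A')) A

end BiMobius

/-- the right derivative of v at (S,T) w.r.t. i ∈ T equals the sum
of the Möbius transform over the interval [(∅, N\{i}), (S, T\{i})] of Q(N). -/
theorem stmt_15 (V : Type*) [Fintype V] [DecidableEq V]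
    (v : Finset V × Finset V → ℝ) (i : V) (S T : Finset V)
    (hST : Disjoint S T) (hiT : i ∈ T) :
    v (S, T \ {i}) - v (S, T) =
      ∑ p ∈ univ.filter (fun p : Finset V × Finset V =>
          Disjoint p.1 p.2 ∧
          (∅ : Finset V) ⊆ p.1 ∧ p.2 ⊆ ({i} : Finset V)ᶜ ∧
          p.1 ⊆ S ∧ T \ {i} ⊆ p.2),
        biMobius v p.1 p.2 := by
  have hsplit := sum_filter_add_sum_filter_not
    (univ.filter fun p : Finset V × Finset V => Disjoint p.1 p.2 ∧ p.1 ⊆ S ∧ T \ {i} ⊆ p.2)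
    (fun p => i ∈ p.2) (fun p => biMobius v p.1 p.2)
  have hwith : ∀ B : Finset V, T \ {i} ⊆ B ∧ i ∈ B ↔ T ⊆ B := fun B => by
    rw [and_comm, ← insert_subset_iff, insert_sdiff_self_of_mem hiT]
  have hwithout : ∀ B : Finset V, B ⊆ ({i} : Finset V)ᶜ ↔ i ∉ B := fun B => by
    rw [subset_compl_iff_disjoint_left, disjoint_singleton_left]
  simp only [filter_filter, and_assoc, hwith] at hsplit
  rw [sum_biMobius_of_le v (hST.mono_right sdiff_subset), sum_biMobius_of_le v hST] at hsplit
  rw [← hsplit, add_sub_cancel_left]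
  refine sum_congr (filter_congr fun p _ => ?_) fun _ _ => rfl
  simp only [hwithout, empty_subset, true_and]
  tauto
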